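/- For every connected graph G with χ(G) ≥ 4, R_3(2G) ≥ (χ(G)−1)(R_2(G)−1) + 2s(G): there is a 3-edge-coloring of K_N with N = (χ(G)−1)(R_2(G)−1) + 2s(G) − 1 containing no monochromatic copy of 2G. -/

import Mathlib

open SimpleGraph

/-- A rainbow path on `ℓ` vertices in an edge coloring `c` of the complete graph on `Fin n`:
an injective sequence of `ℓ` vertices whose `ℓ - 1` consecutive edges get pairwise
distinct colors. -/
def hasRainbowPath (ℓ : ℕ) {n : ℕ} {α : Type*} (c : Sym2 (Fin n) → α) : Prop :=
  ∃ f : Fin ℓ ↪ Fin n, Function.Injective (fun i : Fin (ℓ - 1) =>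
    c s(f ⟨i.1, by have := i.2; omega⟩, f ⟨i.1 + 1, by have := i.2; omega⟩))

/-- A copy of the graph `H` all of whose edges receive the color `i`. -/
def hasCopyInColor {V : Type*} (H : SimpleGraph V) {n : ℕ} {α : Type*}
    (c : Sym2 (Fin n) → α) (i : α) : Prop :=
  ∃ f : V ↪ Fin n, ∀ u v, H.Adj u v → c s(f u, f v) = i

/-- A monochromatic copy of the graph `H`. -/
def hasMonoCopy {V : Type*} (H : SimpleGraph V) {n : ℕ} {α : Type*}
    (c : Sym2 (Fin n) → α) : Prop :=
  ∃ i, hasCopyInColor H c i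

/-- The graph formed by the edges of color `i`. -/
def colorGraph {n : ℕ} {α : Type*} (c : Sym2 (Fin n) → α) (i : α) : SimpleGraph (Fin n) :=
  SimpleGraph.fromEdgeSet {e | c e = i ∧ ¬ e.IsDiag}

/-- A copy, in color `i`, of some connected graph containing `H` as a subgraph:
equivalently, a copy of `H` in color `i` whose vertices all lie in a single
connected component of the graph of color-`i` edges. -/
def hasConnCopyInColor {V : Type*} (H : SimpleGraph V) {n : ℕ} {α : Type*}
    (c : Sym2 (Fin n) → α) (i : α) : Prop :=
  ∃ f : V ↪ Fin n, (∀ u v, H.Adj u v → c s(f u, f v) = i) ∧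
    ∀ u v, (colorGraph c i).Reachable (f u) (f v)

/-- A monochromatic copy of some connected graph containing `H` as a subgraph. -/
def hasMonoConnCopy {V : Type*} (H : SimpleGraph V) {n : ℕ} {α : Type*}
    (c : Sym2 (Fin n) → α) : Prop :=
  ∃ i, hasConnCopyInColor H c i

/-- The `k`-color Ramsey number `R_k(H)`. -/
noncomputable def ramsey {V : Type*} (H : SimpleGraph V) (k : ℕ) : ℕ :=
  sInf {n | ∀ c : Sym2 (Fin n) → Fin k, hasMonoCopy H c}

/-- The asymmetric two-color Ramsey number `R(F, G)`. -/
noncomputable def ramseyPair {V W : Type*} (F : SimpleGraph V) (G : SimpleGraph W) : ℕ :=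
  sInf {n | ∀ c : Sym2 (Fin n) → Fin 2, hasCopyInColor F c 0 ∨ hasCopyInColor G c 1}

/-- `R_2(𝒞(H))`, the two-color Ramsey number of the family of connected graphs
containing `H` as a subgraph. -/
noncomputable def ramseyConn {V : Type*} (H : SimpleGraph V) : ℕ :=
  sInf {n | ∀ c : Sym2 (Fin n) → Fin 2, hasMonoConnCopy H c}

/-- `R(𝒞(F), G)`, the asymmetric Ramsey number: red member of the family of
connected graphs containing `F`, versus blue copy of `G`. -/
noncomputable def ramseyConnPair {V W : Type*} (F : SimpleGraph V) (G : SimpleGraph W) : ℕ :=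
  sInf {n | ∀ c : Sym2 (Fin n) → Fin 2, hasConnCopyInColor F c 0 ∨ hasCopyInColor G c 1}

/-- The Gallai-Ramsey number `gr_k(P_ℓ : H)`: least `n` such that every `k`-coloring of
the edges of `K_n` contains a rainbow path on `ℓ` vertices or a monochromatic copy of `H`. -/
noncomputable def gallaiRamsey (ℓ : ℕ) {V : Type*} (H : SimpleGraph V) (k : ℕ) : ℕ :=
  sInf {n | ∀ c : Sym2 (Fin n) → Fin k, hasRainbowPath ℓ c ∨ hasMonoCopy H c}

/-- `m` vertex-disjoint copies of `H`. -/
def nCopies (m : ℕ) {V : Type*} (H : SimpleGraph V) : SimpleGraph (Fin m × V) where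
  Adj a b := a.1 = b.1 ∧ H.Adj a.2 b.2
  symm := ⟨by rintro a b ⟨h1, h2⟩; exact ⟨h1.symm, h2.symm⟩⟩
  loopless := ⟨by rintro a ⟨-, h⟩; exact H.irrefl h⟩

/-- `s(G)` with respect to `r` colors: the minimum size of a color class over all
proper vertex colorings of `G` with `r` colors. -/
noncomputable def minClass {V : Type*} (G : SimpleGraph V) (r : ℕ) : ℕ :=
  sInf {n | ∃ (C : G.Coloring (Fin r)) (i : Fin r), n = Nat.card {v : V | C v = i}}

/-!
Let `s = s(G)`, `R = R₂(G)` and let `c₀` be a 2-colouring of `K_{R-1}` without a monochromatic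
`G`. Take `r - 1` disjoint blocks coloured by `c₀`, joined to each other in green, and add a set
of `2s - 1` vertices joined to everything in green, its inner edges red (rather than green, so
that it is an independent set of the green graph). A red or blue copy of `G` is connected, so it
lies inside one block, which `c₀` forbids, or inside the extra set, which is too small since
`|G| ≥ r s ≥ 2s`. In a green copy of `G` the block index, with the extra set as an `r`-th
class, is a proper `r`-colouring, so each green copy uses at least `s` extra vertices and two
disjoint ones would need `2s`.
-/

open Finset Function

lemma SimpleGraph.Reachable.apply_eq_of_forall_adj {V β : Type*} {G : SimpleGraph V}
    {f : V → β} (hf : ∀ u v, G.Adj u v → f u = f v) {u v : V} (h : G.Reachable u v) :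
    f u = f v := by
  obtain ⟨p⟩ := h
  induction p with
  | nil => rfl
  | cons h _ ih => exact (hf _ _ h).trans ih

lemma Finset.exists_le_card_fiber_of_sum_le_card {α ι : Type*} [Fintype ι] [Nonempty ι]
    [DecidableEq ι] {s : Finset α} (f : α → ι) {n : ι → ℕ} (h : ∑ i, n i ≤ #s) :
    ∃ i, n i ≤ #{a ∈ s | f a = i} := by
  by_contra! hlt
  have := Finset.sum_lt_sum_of_nonempty univ_nonempty fun i _ => hlt i
  rw [← card_eq_sum_card_fiberwise fun a _ => mem_univ (f a)] at this
  omega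

section Ramsey

variable {k : ℕ}

/-- `RamseyArrow n t` is the arrow relation `n → (t₀, …, t_{k-1})`. -/
def RamseyArrow (n : ℕ) (t : Fin k → ℕ) : Prop :=
  ∀ c : Sym2 (Fin n) → Fin k, ∃ i, ∃ s : Finset (Fin n),
    t i ≤ #s ∧ (s : Set (Fin n)).Pairwise fun a b => c s(a, b) = i

lemma ramseyArrow_sum_add_one {t : Fin k → ℕ} (ht : ∀ i, 0 < t i) (N : Fin k → ℕ)
    (hN : ∀ i, RamseyArrow (N i) (update t i (t i - 1))) : RamseyArrow (∑ i, N i + 1) t := by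
  intro c
  set z := Fin.last (∑ i, N i)
  have : Nonempty (Fin k) := ⟨c s(z, z)⟩
  obtain ⟨i, hi⟩ := exists_le_card_fiber_of_sum_le_card (s := univ.erase z) (c s(z, ·))
    (n := N) (by simp)
  set T := {u ∈ univ.erase z | c s(z, u) = i}
  let e := (T.orderEmbOfCardLe hi).toEmbedding
  have he : ∀ a, e a ∈ T := T.orderEmbOfCardLe_mem hi
  obtain ⟨j, s, hs, hcol⟩ := hN i (c ∘ Sym2.map e)
  have hmap : (s.map e : Set (Fin _)).Pairwise fun a b => c s(a, b) = j := by
    rw [coe_map, e.injective.injOn.pairwise_image]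
    simpa [onFun] using hcol
  by_cases hji : j = i
  · subst hji
    have hz : z ∉ s.map e := by
      simp only [mem_map, not_exists, not_and]
      exact fun a _ hza => (mem_erase.1 (mem_filter.1 (he a)).1).1 hza
    refine ⟨j, insert z (s.map e), ?_, ?_⟩
    · rw [card_insert_of_notMem hz, card_map]
      simp only [update_self] at hs
      have := ht j
      omega
    · have : Std.Symm fun a b : Fin (∑ i, N i + 1) => c s(a, b) = j :=
        ⟨fun a b h => by rwa [Sym2.eq_swap]⟩
      rw [coe_insert, Set.pairwise_insert_of_symm]
      refine ⟨hmap, ?_⟩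
      simp only [coe_map, Set.mem_image, mem_coe]
      rintro _ ⟨a, -, rfl⟩ -
      exact (mem_filter.1 (he a)).2
  · exact ⟨j, s.map e, by simpa [update_of_ne hji] using hs, hmap⟩

theorem exists_ramseyArrow (t : Fin k → ℕ) : ∃ n, RamseyArrow n t := by
  induction hσ : ∑ i, t i using Nat.strong_induction_on generalizing t with
  | _ σ ih =>
  by_cases h0 : ∃ i, t i = 0
  · obtain ⟨i, hi⟩ := h0
    exact ⟨0, fun _ => ⟨i, ∅, by simp [hi], by simp⟩⟩
  · push Not at h0
    have ht : ∀ i, 0 < t i := fun i => Nat.pos_of_ne_zero (h0 i)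
    have hlt : ∀ i, ∑ j, update t i (t i - 1) j < σ := fun i => by
      rw [← hσ, sum_update_of_mem (mem_univ i), ← add_sum_erase _ _ (mem_univ i),
        sdiff_singleton_eq_erase]
      have := ht i
      omega
    choose N hN using fun i => ih _ (hlt i) _ rfl
    exact ⟨_, ramseyArrow_sum_add_one ht N hN⟩

end Ramsey

section RamseyNumber

variable {V X α : Type*} {H : SimpleGraph V} {k n : ℕ}

lemma exists_forall_hasMonoCopy [Finite V] (H : SimpleGraph V) (k : ℕ) :
    ∃ n, ∀ c : Sym2 (Fin n) → Fin k, hasMonoCopy H c := by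
  cases nonempty_fintype V
  obtain ⟨n, hn⟩ := exists_ramseyArrow (fun _ : Fin k => Fintype.card V)
  refine ⟨n, fun c => ?_⟩
  obtain ⟨i, s, hs, hcol⟩ := hn c
  obtain ⟨f⟩ := Function.Embedding.nonempty_of_card_le (β := s) (by simpa using hs)
  exact ⟨i, f.trans (.subtype _), fun u v huv =>
    hcol (f u).2 (f v).2 (Subtype.coe_injective.ne (f.injective.ne huv.ne))⟩

lemma exists_embedding_of_hasMonoCopy_comp_map {c : Sym2 X → α} (e : Fin n ↪ X)
    (h : hasMonoCopy H (c ∘ Sym2.map e)) :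
    ∃ i, ∃ f : V ↪ X, ∀ u v, H.Adj u v → c s(f u, f v) = i := by
  obtain ⟨i, f, hf⟩ := h
  exact ⟨i, f.trans e, fun u v huv => by simpa using hf u v huv⟩

lemma lt_ramsey_of_not_hasMonoCopy [Finite V] {c : Sym2 (Fin n) → Fin k}
    (hc : ¬ hasMonoCopy H c) : n < ramsey H k := by
  by_contra! hle
  have hR : ∀ c : Sym2 (Fin (ramsey H k)) → Fin k, hasMonoCopy H c :=
    Nat.sInf_mem (exists_forall_hasMonoCopy H k)
  exact hc (exists_embedding_of_hasMonoCopy_comp_map (Fin.castLEEmb hle) (hR _))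

lemma exists_not_hasMonoCopy_ramsey_sub_one [Nonempty V] (H : SimpleGraph V) (k : ℕ) :
    ∃ c : Sym2 (Fin (ramsey H k - 1)) → Fin k, ¬ hasMonoCopy H c := by
  by_contra! h
  have : ramsey H k ≤ ramsey H k - 1 := Nat.sInf_le h
  have : IsEmpty (Fin (ramsey H k - 1)) := by
    rw [show ramsey H k - 1 = 0 by omega]
    infer_instance
  obtain ⟨_, f, -⟩ := h isEmptyElim
  exact isEmptyElim (f (Classical.arbitrary V))

end RamseyNumber

section MinClass

variable {V : Type*} {G : SimpleGraph V} {r : ℕ}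

lemma minClass_le_card (C : G.Coloring (Fin r)) (i : Fin r) :
    minClass G r ≤ Nat.card {v | C v = i} :=
  Nat.sInf_le ⟨C, i, rfl⟩

lemma minClass_pos [Finite V] [Nonempty V] (hr : G.chromaticNumber = r) : 0 < minClass G r := by
  obtain ⟨C₀⟩ : G.Colorable r := chromaticNumber_le_iff_colorable.1 hr.le
  obtain ⟨C, i, hCi⟩ : minClass G r ∈ _ :=
    Nat.sInf_mem ⟨_, C₀, C₀ (Classical.arbitrary V), rfl⟩
  obtain ⟨v, hv⟩ := le_chromaticNumber_iff_forall_surjective.1 hr.ge C i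
  rw [hCi]
  exact Nat.card_pos_iff.2 ⟨⟨v, hv⟩, inferInstance⟩

lemma mul_minClass_le_card [Finite V] (hr : G.Colorable r) : r * minClass G r ≤ Nat.card V := by
  obtain ⟨C⟩ := hr
  calc r * minClass G r = ∑ _i : Fin r, minClass G r := by simp
    _ ≤ ∑ i, Nat.card {v | C v = i} := sum_le_sum fun i _ => minClass_le_card C i
    _ = Nat.card V := by
      rw [← Nat.card_sigma]
      exact Nat.card_congr (Equiv.sigmaFiberEquiv C)

end MinClass

section Construction

variable {V γ : Type*} {G : SimpleGraph V} {m n : ℕ} (c₀ : Sym2 (Fin n) → Fin 2)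

def blockClass : (Fin m × Fin n) ⊕ γ → Fin (m + 1)
  | .inl p => p.1.castSucc
  | .inr _ => Fin.last m

def blowupColor : (Fin m × Fin n) ⊕ γ → (Fin m × Fin n) ⊕ γ → Fin 3
  | .inl p, .inl q => if p.1 = q.1 then (c₀ s(p.2, q.2)).castSucc else 2
  | .inr _, .inr _ => 0
  | _, _ => 2

lemma blowupColor_comm (a b : (Fin m × Fin n) ⊕ γ) :
    blowupColor c₀ a b = blowupColor c₀ b a := by
  rcases a with p | _ <;> rcases b with q | _ <;> simp only [blowupColor]
  simp only [eq_comm (a := p.1), Sym2.eq_swap]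

def blowupColoring : Sym2 ((Fin m × Fin n) ⊕ γ) → Fin 3 :=
  Sym2.lift ⟨blowupColor c₀, blowupColor_comm c₀⟩

@[simp]
lemma blowupColoring_mk (a b : (Fin m × Fin n) ⊕ γ) :
    blowupColoring c₀ s(a, b) = blowupColor c₀ a b :=
  rfl

lemma blowupColor_ne_two_iff {a b : (Fin m × Fin n) ⊕ γ} :
    blowupColor c₀ a b ≠ 2 ↔ blockClass a = blockClass b := by
  rcases a with p | _ <;> rcases b with q | _
  · by_cases h : p.1 = q.1
    · simpa [blowupColor, blockClass, h] using (Fin.castSucc_lt_last (c₀ s(p.2, q.2))).ne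
    · simp [blowupColor, blockClass, h]
  · simp [blowupColor, blockClass]
  · simp [blowupColor, blockClass, (Fin.castSucc_ne_last _).symm]
  · simp [blowupColor, blockClass]

lemma blockClass_eq_last_iff {a : (Fin m × Fin n) ⊕ γ} :
    blockClass a = Fin.last m ↔ a ∈ Set.range Sum.inr := by
  rcases a with p | y <;> simp [blockClass]

lemma blockClass_eq_castSucc_iff {a : (Fin m × Fin n) ⊕ γ} {b : Fin m} :
    blockClass a = b.castSucc ↔ ∃ x, a = .inl (b, x) := by
  rcases a with ⟨b', x⟩ | y <;> simp [blockClass, eq_comm]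

lemma card_le_card_of_injective_of_mem_range_inr {ι α : Type*} [Finite γ] {g : ι → α ⊕ γ}
    (hg : Injective g) (hinr : ∀ x, g x ∈ Set.range Sum.inr) : Nat.card ι ≤ Nat.card γ :=
  calc Nat.card ι ≤ Nat.card (Set.range (Sum.inr : γ → α ⊕ γ)) :=
        Nat.card_le_card_of_injective (fun x => ⟨g x, hinr x⟩)
          fun _ _ h => hg (Subtype.ext_iff.1 h)
    _ = Nat.card γ := Nat.card_range_of_injective Sum.inr_injective

lemma minClass_le_card_of_forall_adj_blowupColor_eq_two {g : V → (Fin m × Fin n) ⊕ γ}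
    (hg : ∀ u v, G.Adj u v → blowupColor c₀ (g u) (g v) = 2) :
    minClass G (m + 1) ≤ Nat.card {v | g v ∈ Set.range Sum.inr} := by
  let C : G.Coloring (Fin (m + 1)) :=
    Coloring.mk (blockClass ∘ g) fun h heq => (blowupColor_ne_two_iff c₀).2 heq (hg _ _ h)
  have hC : {v | C v = Fin.last m} = {v | g v ∈ Set.range Sum.inr} :=
    Set.ext fun _ => blockClass_eq_last_iff
  exact hC ▸ minClass_le_card C (Fin.last m)

lemma two_mul_minClass_le_card [Finite V] [Finite γ] {g : Fin 2 × V → (Fin m × Fin n) ⊕ γ}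
    (hg : Injective g)
    (hgreen : ∀ k u v, G.Adj u v → blowupColor c₀ (g (k, u)) (g (k, v)) = 2) :
    2 * minClass G (m + 1) ≤ Nat.card γ :=
  calc 2 * minClass G (m + 1)
      ≤ ∑ k : Fin 2, Nat.card {v | g (k, v) ∈ Set.range Sum.inr} := by
        rw [Fin.sum_univ_two, two_mul]
        exact add_le_add (minClass_le_card_of_forall_adj_blowupColor_eq_two c₀ (hgreen 0))
          (minClass_le_card_of_forall_adj_blowupColor_eq_two c₀ (hgreen 1))
    _ = Nat.card {x | g x ∈ Set.range Sum.inr} := by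
        rw [← Nat.card_sigma]
        exact (Nat.card_congr (Equiv.subtypeProdEquivSigmaSubtype fun k v => _)).symm
    _ ≤ Nat.card γ :=
        card_le_card_of_injective_of_mem_range_inr (hg.comp Subtype.val_injective) fun x => x.2

lemma card_le_card_of_forall_adj_blowupColor_eq_castSucc [Finite γ] (hG : G.Connected)
    (hc₀ : ¬ hasMonoCopy G c₀) {g : V → (Fin m × Fin n) ⊕ γ} (hg : Injective g)
    {i : Fin 2}
    (hcol : ∀ u v, G.Adj u v → blowupColor c₀ (g u) (g v) = i.castSucc) :
    Nat.card V ≤ Nat.card γ := by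
  have hconst : ∀ u v, blockClass (g u) = blockClass (g v) := fun u v =>
    (hG u v).apply_eq_of_forall_adj (f := blockClass ∘ g) fun u v h =>
      (blowupColor_ne_two_iff c₀).1 (hcol u v h ▸ (Fin.castSucc_lt_last i).ne)
  obtain ⟨v₀⟩ := hG.nonempty
  rcases Fin.eq_castSucc_or_eq_last (blockClass (g v₀)) with ⟨b, hb⟩ | hlast
  · choose x hx using fun v => blockClass_eq_castSucc_iff.1 ((hconst v v₀).trans hb)
    have hcopy : ∀ u v, G.Adj u v → c₀ s(x u, x v) = i := fun u v h => by
      simpa [hx, blowupColor] using hcol u v h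
    exact (hc₀ ⟨i, ⟨x, fun u v h => hg (by rw [hx u, hx v, h])⟩, hcopy⟩).elim
  · exact card_le_card_of_injective_of_mem_range_inr hg fun v =>
      blockClass_eq_last_iff.1 ((hconst v v₀).trans hlast)

theorem not_forall_adj_blowupColoring_eq [Finite V] [Finite γ] (hG : G.Connected)
    (hc₀ : ¬ hasMonoCopy G c₀) (hγ : Nat.card γ < 2 * minClass G (m + 1))
    (hγV : Nat.card γ < Nat.card V) (i : Fin 3) (g : Fin 2 × V ↪ (Fin m × Fin n) ⊕ γ) :
    ¬ ∀ u v, (nCopies 2 G).Adj u v → blowupColoring c₀ s(g u, g v) = i := by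
  intro hg
  simp only [blowupColoring_mk] at hg
  rcases Fin.eq_castSucc_or_eq_last i with ⟨j, rfl⟩ | rfl
  · exact hγV.not_ge <| card_le_card_of_forall_adj_blowupColor_eq_castSucc c₀ hG hc₀
      (g.injective.comp (Prod.mk_right_injective 0)) fun u v h => hg (0, u) (0, v) ⟨rfl, h⟩
  · exact hγ.not_ge <| two_mul_minClass_le_card c₀ g.injective
      fun k u v h => hg (k, u) (k, v) ⟨rfl, h⟩

theorem exists_not_hasMonoCopy_nCopies_two [Finite V] (hG : G.Connected)
    (hc₀ : ¬ hasMonoCopy G c₀) (hs : 0 < minClass G (m + 1))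
    (hV : 2 * minClass G (m + 1) ≤ Nat.card V) :
    ∃ c : Sym2 (Fin (m * n + 2 * minClass G (m + 1) - 1)) → Fin 3,
      ¬ hasMonoCopy (nCopies 2 G) c := by
  have hcard : Fintype.card ((Fin m × Fin n) ⊕ Fin (2 * minClass G (m + 1) - 1)) =
      m * n + 2 * minClass G (m + 1) - 1 := by
    simp only [Fintype.card_sum, Fintype.card_prod, Fintype.card_fin]
    omega
  let e := (Fintype.equivFinOfCardEq hcard).symm
  refine ⟨blowupColoring c₀ ∘ Sym2.map e, fun h => ?_⟩
  obtain ⟨i, g, hg⟩ := exists_embedding_of_hasMonoCopy_comp_map e.toEmbedding h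
  have hγ : Nat.card (Fin (2 * minClass G (m + 1) - 1)) = 2 * minClass G (m + 1) - 1 :=
    Nat.card_fin _
  exact not_forall_adj_blowupColoring_eq c₀ hG hc₀ (by omega) (by omega) i g hg

end Construction

/-- For a connected graph `G` with `χ(G) = r ≥ 4`, `R₃(2G) ≥ (r−1)(R₂(G)−1) + 2s(G)`:
there is a 3-coloring of `K_N`, `N = (r−1)(R₂(G)−1) + 2s(G) − 1`, with no
monochromatic `2G`. -/
theorem stmt16 {V : Type*} [Fintype V] (G : SimpleGraph V) (hconn : G.Connected)
    (r : ℕ) (hr : G.chromaticNumber = (r : ℕ∞)) (hr4 : 4 ≤ r) :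
    (r - 1) * (ramsey G 2 - 1) + 2 * minClass G r ≤ ramsey (nCopies 2 G) 3 ∧
    ∃ c : Sym2 (Fin ((r - 1) * (ramsey G 2 - 1) + 2 * minClass G r - 1)) → Fin 3,
      ¬ hasMonoCopy (nCopies 2 G) c := by
  obtain ⟨m, rfl⟩ : ∃ m, r = m + 1 := ⟨r - 1, by omega⟩
  have : Nonempty V := hconn.nonempty
  have hs := minClass_pos hr
  have hV := mul_minClass_le_card (chromaticNumber_le_iff_colorable.1 hr.le)
  obtain ⟨c₀, hc₀⟩ := exists_not_hasMonoCopy_ramsey_sub_one G 2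
  obtain ⟨c, hc⟩ := exists_not_hasMonoCopy_nCopies_two c₀ hconn hc₀ hs (by nlinarith)
  have hlt := lt_ramsey_of_not_hasMonoCopy hc
  simp only [Nat.add_sub_cancel]
  exact ⟨by omega, c, hc⟩
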